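/- Variational formula for the sandwiched Rényi trace functional: let σ, τ be positive definite density matrices on a finite-dimensional complex Hilbert space and let α ∈ (0,1). Then the supremum of Tr(η σ^{1/2} τ^{−α} σ^{1/2}) over all positive semidefinite matrices η with Tr(η^{1/α}) = 1 equals (Tr[(τ^{−α/2} σ τ^{−α/2})^{1/(1−α)}])^{1−α}. -/

import Mathlib

open Matrix
open scoped Kronecker ComplexOrder

/-- Real power of a Hermitian matrix via the spectral functional calculus
(junk value `0` on non-Hermitian matrices). -/
noncomputable def mpow {m : Type*} [Fintype m] [DecidableEq m]
    (A : Matrix m m ℂ) (r : ℝ) : Matrix m m ℂ :=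
  if hA : A.IsHermitian then
    (hA.eigenvectorUnitary : Matrix m m ℂ) *
      Matrix.diagonal (fun i => ((hA.eigenvalues i ^ r : ℝ) : ℂ)) *
      (star (hA.eigenvectorUnitary : Matrix m m ℂ))
  else 0

/-- Logarithm of a Hermitian matrix via the spectral functional calculus
(junk value `0` on non-Hermitian matrices). -/
noncomputable def mlog {m : Type*} [Fintype m] [DecidableEq m]
    (A : Matrix m m ℂ) : Matrix m m ℂ :=
  if hA : A.IsHermitian then
    (hA.eigenvectorUnitary : Matrix m m ℂ) *
      Matrix.diagonal (fun i => ((Real.log (hA.eigenvalues i) : ℝ) : ℂ)) *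
      (star (hA.eigenvectorUnitary : Matrix m m ℂ))
  else 0

/-- A density matrix: positive semidefinite with unit trace. -/
def IsDensity {m : Type*} [Fintype m] [DecidableEq m] (A : Matrix m m ℂ) : Prop :=
  A.PosSemidef ∧ A.trace = 1

/-- Sandwiched Rényi relative entropy
`S_n(ρ‖σ) = (n-1)⁻¹ log Tr[(σ^{(1-n)/(2n)} ρ σ^{(1-n)/(2n)})^n]`. -/
noncomputable def SRenyi {m : Type*} [Fintype m] [DecidableEq m]
    (n : ℝ) (ρ σ : Matrix m m ℂ) : ℝ :=
  (n - 1)⁻¹ *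
    Real.log ((mpow (mpow σ ((1 - n) / (2 * n)) * ρ * mpow σ ((1 - n) / (2 * n))) n).trace.re)

/-- Quantum relative entropy `S(ρ‖σ) = Tr(ρ log ρ) - Tr(ρ log σ)`. -/
noncomputable def relEnt {m : Type*} [Fintype m] [DecidableEq m]
    (ρ σ : Matrix m m ℂ) : ℝ :=
  ((ρ * mlog ρ).trace - (ρ * mlog σ).trace).re

/-- von Neumann entropy `S(τ) = -Tr(τ log τ)`. -/
noncomputable def vnEnt {m : Type*} [Fintype m] [DecidableEq m]
    (τ : Matrix m m ℂ) : ℝ :=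
  -((τ * mlog τ).trace.re)

/-!
Put `M = σ^{1/2} τ^{-α} σ^{1/2}`, `p = 1/α` and `q = 1/(1-α)`. The functional is `η ↦ Tr(η M)`
and the claim is the duality of the Schatten `p`- and `q`-norms. In eigenbases `(uᵢ)` of `η` and
`(vⱼ)` of `M`, `Tr(η M) = ∑ μᵢ λⱼ ‖⟪uᵢ, vⱼ⟫‖²` where the weights `‖⟪uᵢ, vⱼ⟫‖²` form a doubly
stochastic matrix, so Hölder's inequality gives `Tr(η M) ≤ ‖μ‖_p ‖λ‖_q`, with equality for
`η ∝ M^{q/p}`. Finally `M = Yᴴ Y` and `τ^{-α/2} σ τ^{-α/2} = Y Yᴴ` for `Y = τ^{-α/2} σ^{1/2}`;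
these have the same characteristic polynomial, so `‖λ‖_q` is the right-hand side.
-/

lemma Matrix.IsHermitian.trace_cfc {𝕜 m : Type*} [RCLike 𝕜] [Fintype m] [DecidableEq m]
    {A : Matrix m m 𝕜} (hA : A.IsHermitian) (f : ℝ → ℝ) :
    (cfc f A).trace = ∑ i, (f (hA.eigenvalues i) : 𝕜) := by
  rw [hA.cfc_eq, IsHermitian.cfc, Unitary.conjStarAlgAut_apply, trace_mul_cycle,
    Unitary.coe_star_mul_self, one_mul, trace_diagonal]
  rfl

lemma Matrix.PosDef.pos_of_mem_spectrum {𝕜 m : Type*} [RCLike 𝕜] [Fintype m] [DecidableEq m]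
    {A : Matrix m m 𝕜} (hA : A.PosDef) {x : ℝ} (hx : x ∈ spectrum ℝ A) : 0 < x := by
  rw [hA.isHermitian.spectrum_real_eq_range_eigenvalues] at hx
  obtain ⟨i, rfl⟩ := hx
  exact hA.eigenvalues_pos i

section mpow

variable {m : Type*} [Fintype m] [DecidableEq m] {A : Matrix m m ℂ}

lemma mpow_eq_cfc (hA : A.IsHermitian) (r : ℝ) : mpow A r = cfc (fun x : ℝ => x ^ r) A := by
  rw [hA.cfc_eq, IsHermitian.cfc, Unitary.conjStarAlgAut_apply, mpow, dif_pos hA]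
  rfl

lemma isHermitian_mpow (A : Matrix m m ℂ) (r : ℝ) : (mpow A r).IsHermitian := by
  by_cases hA : A.IsHermitian
  · rw [mpow_eq_cfc hA]
    exact cfc_predicate _ A
  · rw [mpow, dif_neg hA]
    exact isHermitian_zero

lemma trace_mpow (hA : A.IsHermitian) (r : ℝ) :
    (mpow A r).trace = ∑ i, ((hA.eigenvalues i ^ r : ℝ) : ℂ) := by
  rw [mpow_eq_cfc hA, hA.trace_cfc, RCLike.ofReal_eq_complex_ofReal]

lemma posDef_mpow (hA : A.PosDef) (r : ℝ) : (mpow A r).PosDef := by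
  rw [mpow, dif_pos hA.isHermitian,
    IsUnit.posDef_star_right_conjugate_iff Unitary.isUnit_coe, posDef_diagonal_iff]
  exact fun i => by simpa using Real.rpow_pos_of_pos (hA.eigenvalues_pos i) r

lemma mpow_mul_mpow (hA : A.PosDef) (r s : ℝ) :
    mpow A r * mpow A s = mpow A (r + s) := by
  simp only [mpow_eq_cfc hA.isHermitian]
  rw [← cfc_mul _ _ A (A.finite_real_spectrum.continuousOn _)
    (A.finite_real_spectrum.continuousOn _)]
  exact cfc_congr fun x hx => (Real.rpow_add (hA.pos_of_mem_spectrum hx) r s).symm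

lemma mpow_one (hA : A.IsHermitian) : mpow A 1 = A := by
  simp only [mpow_eq_cfc hA, Real.rpow_one]
  exact cfc_id' ℝ A

lemma trace_mpow_conjTranspose_mul_self (Y : Matrix m m ℂ) (r : ℝ) :
    (mpow (Yᴴ * Y) r).trace = (mpow (Y * Yᴴ) r).trace := by
  have h₁ := isHermitian_conjTranspose_mul_self Y
  have h₂ := isHermitian_mul_conjTranspose_self Y
  have h : h₁.eigenvalues = h₂.eigenvalues :=
    (h₁.eigenvalues_eq_eigenvalues_iff h₂).mpr (charpoly_mul_comm _ _)
  rw [trace_mpow h₁, trace_mpow h₂, h]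

end mpow

lemma sum_sum_mul_mul_le_of_mem_doublyStochastic {ι : Type*} [Fintype ι] [DecidableEq ι]
    {c : Matrix ι ι ℝ} (hc : c ∈ doublyStochastic ℝ ι) {a b : ι → ℝ} (ha : ∀ i, 0 ≤ a i)
    (hb : ∀ j, 0 ≤ b j) {p q : ℝ} (hpq : p.HolderConjugate q) :
    ∑ i, ∑ j, a i * b j * c i j ≤ (∑ i, a i ^ p) ^ (1 / p) * (∑ j, b j ^ q) ^ (1 / q) := by
  have hc0 : ∀ i j, 0 ≤ c i j := fun _ _ => nonneg_of_mem_doublyStochastic hc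
  -- Hölder on `ι × ι` after splitting `c = c ^ (1 / p) * c ^ (1 / q)`.
  let F : ι × ι → ℝ := fun x => c x.1 x.2 ^ (1 / p) * a x.1
  let G : ι × ι → ℝ := fun x => c x.1 x.2 ^ (1 / q) * b x.2
  have hFG : ∀ i j, F (i, j) * G (i, j) = a i * b j * c i j := fun i j => by
    have hsplit : c i j ^ (1 / p) * c i j ^ (1 / q) = c i j := by
      rw [← Real.rpow_add' (hc0 i j) (by simp [hpq.inv_add_inv_eq_one]), one_div, one_div,
        hpq.inv_add_inv_eq_one, Real.rpow_one]
    linear_combination a i * b j * hsplit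
  have hF : ∀ i j, F (i, j) ^ p = c i j * a i ^ p := fun i j => by
    rw [Real.mul_rpow (Real.rpow_nonneg (hc0 i j) _) (ha i), ← Real.rpow_mul (hc0 i j),
      one_div_mul_cancel hpq.ne_zero, Real.rpow_one]
  have hG : ∀ i j, G (i, j) ^ q = c i j * b j ^ q := fun i j => by
    rw [Real.mul_rpow (Real.rpow_nonneg (hc0 i j) _) (hb j), ← Real.rpow_mul (hc0 i j),
      one_div_mul_cancel hpq.symm.ne_zero, Real.rpow_one]
  have hFp : ∑ x, F x ^ p = ∑ i, a i ^ p := by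
    simp only [Fintype.sum_prod_type, hF, ← Finset.sum_mul, sum_row_of_mem_doublyStochastic hc,
      one_mul]
  have hGq : ∑ x, G x ^ q = ∑ j, b j ^ q := by
    simp only [Fintype.sum_prod_type_right, hG, ← Finset.sum_mul,
      sum_col_of_mem_doublyStochastic hc, one_mul]
  calc ∑ i, ∑ j, a i * b j * c i j = ∑ x, F x * G x := by
        simp only [Fintype.sum_prod_type, hFG]
    _ ≤ (∑ x, F x ^ p) ^ (1 / p) * (∑ x, G x ^ q) ^ (1 / q) :=
        Real.inner_le_Lp_mul_Lq_of_nonneg _ hpq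
          (fun x _ => mul_nonneg (Real.rpow_nonneg (hc0 _ _) _) (ha x.1))
          (fun x _ => mul_nonneg (Real.rpow_nonneg (hc0 _ _) _) (hb x.2))
    _ = _ := by rw [hFp, hGq]

section trace

variable {𝕜 m : Type*} [RCLike 𝕜] [Fintype m] [DecidableEq m]

lemma of_norm_sq_mem_doublyStochastic {W : Matrix m m 𝕜} (hW : W ∈ unitaryGroup m 𝕜) :
    of (fun i j => ‖W i j‖ ^ 2) ∈ doublyStochastic ℝ m := by
  refine mem_doublyStochastic_iff_sum.mpr ⟨fun _ _ => sq_nonneg _, fun i => ?_, fun j => ?_⟩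
  · have h := congrFun (congrFun (mem_unitaryGroup_iff.mp hW) i) i
    simp only [mul_apply, star_apply, one_apply_eq, RCLike.star_def, RCLike.mul_conj] at h
    exact_mod_cast h
  · have h := congrFun (congrFun (mem_unitaryGroup_iff'.mp hW) j) j
    simp only [mul_apply, star_apply, one_apply_eq, RCLike.star_def, RCLike.conj_mul] at h
    exact_mod_cast h

lemma re_trace_diagonal_mul_conj (a b : m → ℝ) (W : Matrix m m 𝕜) :
    RCLike.re (diagonal (fun i => (a i : 𝕜)) * W * diagonal (fun j => (b j : 𝕜)) * star W).trace =
      ∑ i, ∑ j, a i * b j * ‖W i j‖ ^ 2 := by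
  simp only [trace, diag_apply, mul_apply (M := _ * _ * _), mul_diagonal, diagonal_mul,
    star_apply, RCLike.star_def, map_sum]
  refine Finset.sum_congr rfl fun i _ => Finset.sum_congr rfl fun j _ => ?_
  have h : (a i : 𝕜) * W i j * (b j : 𝕜) * (starRingEnd 𝕜) (W i j) =
      ((a i * b j * ‖W i j‖ ^ 2 : ℝ) : 𝕜) := by
    push_cast
    linear_combination (a i * b j : 𝕜) * RCLike.mul_conj (W i j)
  rw [h, RCLike.ofReal_re]

lemma Matrix.IsHermitian.re_trace_mul {A B : Matrix m m 𝕜}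
    (hA : A.IsHermitian) (hB : B.IsHermitian) :
    RCLike.re (A * B).trace = ∑ i, ∑ j, hA.eigenvalues i * hB.eigenvalues j *
      ‖(star (hA.eigenvectorUnitary : Matrix m m 𝕜) * hB.eigenvectorUnitary) i j‖ ^ 2 := by
  conv_lhs => rw [hA.spectral_theorem, hB.spectral_theorem]
  rw [← re_trace_diagonal_mul_conj]
  simp only [Unitary.conjStarAlgAut_apply]
  rw [mul_assoc, mul_assoc, trace_mul_comm]
  simp only [star_mul, star_star, mul_assoc]
  rfl

lemma Matrix.PosSemidef.re_trace_mul_le {A B : Matrix m m 𝕜} (hA : A.PosSemidef)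
    (hB : B.PosSemidef) {p q : ℝ} (hpq : p.HolderConjugate q) :
    RCLike.re (A * B).trace ≤ (∑ i, hA.isHermitian.eigenvalues i ^ p) ^ (1 / p) *
      (∑ j, hB.isHermitian.eigenvalues j ^ q) ^ (1 / q) := by
  rw [hA.isHermitian.re_trace_mul hB.isHermitian]
  exact sum_sum_mul_mul_le_of_mem_doublyStochastic
    (of_norm_sq_mem_doublyStochastic (mul_mem (Unitary.star_mem (Subtype.prop _))
      (Subtype.prop _))) hA.eigenvalues_nonneg hB.eigenvalues_nonneg hpq

end trace

section variational

variable {m : Type*} [Fintype m] [DecidableEq m] {M : Matrix m m ℂ} {p q : ℝ}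

open scoped MatrixOrder in
lemma isGreatest_re_trace_mul [Nonempty m] (hM : M.PosDef) (hpq : p.HolderConjugate q) :
    IsGreatest ((fun η : Matrix m m ℂ => (η * M).trace.re) ''
        {η | η.PosSemidef ∧ (mpow η p).trace = 1})
      ((∑ i, hM.isHermitian.eigenvalues i ^ q) ^ (1 / q)) := by
  set T := ∑ i, hM.isHermitian.eigenvalues i ^ q
  have hT : 0 < T :=
    Finset.sum_pos (fun i _ => Real.rpow_pos_of_pos (hM.eigenvalues_pos i) _) Finset.univ_nonempty
  have hcont (f : ℝ → ℝ) : ContinuousOn f (spectrum ℝ M) := M.finite_real_spectrum.continuousOn f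
  let f : ℝ → ℝ := fun x => T ^ (-1 / p) * x ^ (q / p)
  have hf_pow {x : ℝ} (hx : 0 < x) : f x ^ p = T⁻¹ * x ^ q := by
    rw [Real.mul_rpow (by positivity) (by positivity), ← Real.rpow_mul hT.le,
      ← Real.rpow_mul hx.le, div_mul_cancel₀ _ hpq.ne_zero, div_mul_cancel₀ _ hpq.ne_zero,
      Real.rpow_neg_one]
  have hf_mul {x : ℝ} (hx : 0 < x) : f x * x = T ^ (-1 / p) * x ^ q := by
    rw [mul_assoc, ← Real.rpow_add_one hx.ne', hpq.symm.div_conj_eq_sub_one, sub_add_cancel]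
  refine ⟨⟨cfc f M, ⟨?_, ?_⟩, ?_⟩, ?_⟩
  · refine nonneg_iff_posSemidef.mp (cfc_nonneg fun x hx => ?_)
    have := hM.pos_of_mem_spectrum hx
    positivity
  · rw [mpow_eq_cfc (cfc_predicate f M), ← cfc_comp' _ _ M
      ((M.finite_real_spectrum.image f).continuousOn _) (hcont f), hM.isHermitian.trace_cfc,
      RCLike.ofReal_eq_complex_ofReal, ← Complex.ofReal_one, ← inv_mul_cancel₀ hT.ne',
      Finset.mul_sum, Complex.ofReal_sum]
    exact Finset.sum_congr rfl fun i _ => by rw [hf_pow (hM.eigenvalues_pos i)]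
  · show (cfc f M * M).trace.re = T ^ (1 / q)
    rw [show cfc f M * M = cfc (fun x => f x * x) M by
        rw [cfc_mul f (fun x => x) M (hcont _) (hcont _), cfc_id' ℝ M],
      hM.isHermitian.trace_cfc, RCLike.ofReal_eq_complex_ofReal, ← Complex.ofReal_sum,
      Complex.ofReal_re, Finset.sum_congr rfl fun i _ => hf_mul (hM.eigenvalues_pos i), ← Finset.mul_sum,
      ← Real.rpow_add_one hT.ne']
    congr 1
    rw [neg_div, neg_add_eq_sub, one_div, one_div, hpq.one_sub_inv]
  · rintro _ ⟨η, ⟨hη, hηp⟩, rfl⟩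
    have hsum : ∑ i, hη.isHermitian.eigenvalues i ^ p = 1 := by
      rw [trace_mpow hη.isHermitian] at hηp
      exact_mod_cast hηp
    simpa [hsum] using hη.re_trace_mul_le hM.posSemidef hpq

lemma sSup_re_trace_mul (hM : M.PosDef) (hpq : p.HolderConjugate q) :
    sSup ((fun η : Matrix m m ℂ => (η * M).trace.re) ''
        {η | η.PosSemidef ∧ (mpow η p).trace = 1}) =
      (∑ i, hM.isHermitian.eigenvalues i ^ q) ^ (1 / q) := by
  rcases isEmpty_or_nonempty m with hm | hm
  · have : {η : Matrix m m ℂ | η.PosSemidef ∧ (mpow η p).trace = 1} = ∅ := by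
      simp [trace]
    rw [this, Set.image_empty, Real.sSup_empty, Finset.univ_eq_empty, Finset.sum_empty,
      Real.zero_rpow hpq.symm.one_div_ne_zero]
  · exact (isGreatest_re_trace_mul hM hpq).csSup_eq

end variational

theorem srenyi_variational_general {m : Type*} [Fintype m] [DecidableEq m]
    (σ τ : Matrix m m ℂ)
    (hσpd : σ.PosDef) (hτpd : τ.PosDef)
    (α : ℝ) (hα : α ∈ Set.Ioo (0 : ℝ) 1) :
    sSup ((fun η : Matrix m m ℂ =>
        ((η * mpow σ (1 / 2) * mpow τ (-α) * mpow σ (1 / 2)).trace.re)) ''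
        {η | η.PosSemidef ∧ (mpow η (1 / α)).trace = 1}) =
      ((mpow (mpow τ (-(α / 2)) * σ * mpow τ (-(α / 2))) (1 / (1 - α))).trace.re) ^ (1 - α) := by
  obtain ⟨hα₀, hα₁⟩ := hα
  have hpq : (1 / α).HolderConjugate (1 / (1 - α)) :=
    Real.holderConjugate_one_div hα₀ (by linarith) (by ring)
  set P := mpow σ (1 / 2)
  set Q := mpow τ (-(α / 2))
  have hP : Pᴴ = P := isHermitian_mpow σ _
  have hQ : Qᴴ = Q := isHermitian_mpow τ _
  have hPP : P * P = σ := by rw [mpow_mul_mpow hσpd, add_halves, mpow_one hσpd.isHermitian]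
  have hQQ : Q * Q = mpow τ (-α) := by rw [mpow_mul_mpow hτpd, ← neg_add, add_halves]
  have hM : ∀ η : Matrix m m ℂ, η * P * mpow τ (-α) * P = η * ((Q * P)ᴴ * (Q * P)) := by
    intro η
    rw [conjTranspose_mul, hP, hQ, ← hQQ]
    simp only [mul_assoc]
  have hN : Q * σ * Q = (Q * P) * (Q * P)ᴴ := by
    rw [conjTranspose_mul, hP, hQ, ← hPP]
    simp only [mul_assoc]
  have hY : IsUnit (Q * P) := ((posDef_mpow hτpd _).isUnit).mul (posDef_mpow hσpd _).isUnit
  have hMpd := PosDef.conjTranspose_mul_self _ (mulVec_injective_iff_isUnit.mpr hY)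
  simp only [hM]
  rw [sSup_re_trace_mul hMpd hpq, hN, ← trace_mpow_conjTranspose_mul_self,
    trace_mpow hMpd.isHermitian, ← Complex.ofReal_sum, Complex.ofReal_re, one_div_one_div]

/-- variational formula for the sandwiched Rényi trace functional:
`sup {Tr(η σ^{1/2} τ^{-α} σ^{1/2}) : η ⪰ 0, Tr(η^{1/α}) = 1}
  = (Tr[(τ^{-α/2} σ τ^{-α/2})^{1/(1-α)}])^{1-α}`. -/
theorem srenyi_variational {m : Type*} [Fintype m] [DecidableEq m]
    (σ τ : Matrix m m ℂ) (hσ : IsDensity σ) (hτ : IsDensity τ)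
    (hσpd : σ.PosDef) (hτpd : τ.PosDef)
    (α : ℝ) (hα : α ∈ Set.Ioo (0 : ℝ) 1) :
    sSup ((fun η : Matrix m m ℂ =>
        ((η * mpow σ (1 / 2) * mpow τ (-α) * mpow σ (1 / 2)).trace.re)) ''
        {η | η.PosSemidef ∧ (mpow η (1 / α)).trace = 1}) =
      ((mpow (mpow τ (-(α / 2)) * σ * mpow τ (-(α / 2))) (1 / (1 - α))).trace.re) ^ (1 - α) :=
  srenyi_variational_general σ τ hσpd hτpd α hα
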